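/- arXiv:2203.15855 — 5 statements merged into one kernel-verified Lean document; each statement's English description precedes it below -/
import Mathlib

section
/- Let A be a supercommutative ℤ/2-graded ring and let J be the two-sided ideal of A generated by the odd component 𝒜 1. Assume that J is generated as a two-sided ideal by finitely many odd elements, and that J is nilpotent, i.e. there exists n such that every product of n elements of J vanishes. Then A is left Artinian (Artinian as a left module over itself) if and only if the bosonic reduction A/J is an Artinian ring. -/
/-!
Odd elements skew-commute with every homogeneous element, so `a * r ∈ A * a` for odd `a`: the
two-sided ideal `J` generated by finitely many odd elements is already the left ideal they
generate, hence finitely generated as a left ideal. A finitely generated module is then filtered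
by `J ^ k • M`; its factors are finitely generated `A ⧸ J`-modules, hence Artinian, and the
filtration reaches `0` because `J` is nilpotent.
-/

section

variable {R M : Type*} [Ring R] [AddCommGroup M] [Module R M]

theorem isArtinian_of_isTorsionBySet (I : Ideal R) [I.IsTwoSided] [IsArtinianRing (R ⧸ I)]
    [Module.Finite R M] (hM : Module.IsTorsionBySet R M I) : IsArtinian R M := by
  let _ := hM.module
  have : Module.Finite (R ⧸ I) M := Module.Finite.of_restrictScalars_finite R _ _
  exact (hM.semilinearMap.isArtinian_iff_of_bijective Function.bijective_id).mpr inferInstance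

theorem isArtinian_of_pow_le_annihilator (I : Ideal R) [I.IsTwoSided] [IsArtinianRing (R ⧸ I)]
    (hI : I.FG) (n : ℕ) [Module.Finite R M] (hn : I ^ n ≤ Module.annihilator R M) :
    IsArtinian R M := by
  induction n generalizing M with
  | zero =>
    rw [I.pow_zero, Ideal.one_eq_top] at hn
    exact isArtinian_of_isTorsionBySet I <|
      (Module.isTorsionBySet_iff_subset_annihilator R M).mpr (le_top.trans hn)
  | succ n ih =>
    let N : Submodule R M := I • ⊤
    have : Module.Finite R N :=
      Module.Finite.iff_fg.mpr (Submodule.FG.smul hI Module.Finite.fg_top)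
    have hN : IsArtinian R N := ih (by
      rwa [← Submodule.annihilator_top, Submodule.le_annihilator_iff, I.pow_succ,
        Submodule.mul_smul, ← Submodule.le_annihilator_iff] at hn)
    have hQ : IsArtinian R (M ⧸ N) := isArtinian_of_isTorsionBySet I <| by
      rw [Module.isTorsionBySet_quotient_iff]
      exact fun m i hi ↦ Submodule.smul_mem_smul hi trivial
    exact (isArtinian_iff_submodule_quotient N).mpr ⟨hN, hQ⟩

end

section

variable {R : Type*} [Ring R]

theorem TwoSidedIdeal.asIdeal_pow_eq_bot_of_forall_list_prod_eq_zero (I : TwoSidedIdeal R)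
    {n : ℕ} (h : ∀ l : List R, l.length = n → (∀ a ∈ l, a ∈ I) → l.prod = 0) :
    I.asIdeal ^ n = ⊥ := by
  have mul_prod_eq_zero : ∀ k, ∀ x ∈ I.asIdeal ^ k, ∀ l : List R, k + l.length = n →
      (∀ a ∈ l, a ∈ I) → x * l.prod = 0 := by
    intro k
    induction k with
    | zero => intro x _ l hl hlI; rw [h l (by omega) hlI, mul_zero]
    | succ k ih =>
      intro x hx
      rw [Submodule.pow_succ] at hx
      refine Submodule.mul_induction_on hx (fun y hy a ha l hl hlI ↦ ?_)
        fun x y hx hy l hl hlI ↦ ?_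
      · rw [mul_assoc, ← List.prod_cons]
        refine ih y hy (a :: l) (by rw [List.length_cons]; omega) ?_
        simpa [TwoSidedIdeal.mem_asIdeal] using ⟨ha, hlI⟩
      · rw [add_mul, hx l hl hlI, hy l hl hlI, add_zero]
  refine eq_bot_iff.mpr fun x hx ↦ ?_
  simpa using mul_prod_eq_zero n x hx [] (by simp) (by simp)

theorem Ideal.isTwoSided_span_of_forall_exists_mul_eq_mul {s : Set R}
    (h : ∀ a ∈ s, ∀ r : R, ∃ r', a * r = r' * a) : (Ideal.span s).IsTwoSided := by
  refine ⟨fun r hx ↦ ?_⟩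
  induction hx using Submodule.span_induction generalizing r with
  | mem a ha =>
    obtain ⟨r', hr'⟩ := h a ha r
    rw [hr']
    exact Ideal.mul_mem_left _ r' (Ideal.subset_span ha)
  | zero => rw [zero_mul]; exact zero_mem _
  | add x y _ _ hx hy => rw [add_mul]; exact add_mem (hx r) (hy r)
  | smul c x _ hx => rw [smul_eq_mul, mul_assoc]; exact Ideal.mul_mem_left _ c (hx r)

theorem TwoSidedIdeal.asIdeal_span_of_forall_exists_mul_eq_mul {s : Set R}
    (h : ∀ a ∈ s, ∀ r : R, ∃ r', a * r = r' * a) :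
    (TwoSidedIdeal.span s).asIdeal = Ideal.span s := by
  have := Ideal.isTwoSided_span_of_forall_exists_mul_eq_mul h
  refine le_antisymm ?_ (Ideal.span_le.mpr fun a ha ↦ ?_)
  · rw [← Ideal.asIdeal_toTwoSided (Ideal.span s)]
    exact TwoSidedIdeal.asIdeal.monotone <| TwoSidedIdeal.span_le.mpr <| by
      rw [Ideal.coe_toTwoSided]; exact Ideal.subset_span
  · exact TwoSidedIdeal.mem_asIdeal.mpr (TwoSidedIdeal.subset_span ha)

theorem TwoSidedIdeal.isArtinianRing_quotient_asIdeal (I : TwoSidedIdeal R)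
    [IsArtinianRing I.ringCon.Quotient] : IsArtinianRing (R ⧸ I.asIdeal) :=
  (RingCon.lift_surjective_of_surjective (f := Ideal.Quotient.mk I.asIdeal)
    (fun x y hxy ↦ Ideal.Quotient.eq.mpr ((I.rel_iff x y).mp hxy))
    Ideal.Quotient.mk_surjective).isArtinianRing

end

theorem exists_mul_eq_mul_of_mem_odd {A : Type*} [Ring A] (𝒜 : ZMod 2 → AddSubgroup A)
    [GradedRing 𝒜]
    (hsc : ∀ (i j : ZMod 2) (a b : A), a ∈ 𝒜 i → b ∈ 𝒜 j →
      a * b = (-1 : A) ^ (i.val * j.val) * (b * a)) {a : A} (ha : a ∈ 𝒜 1) (r : A) :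
    ∃ r', a * r = r' * a := by
  induction r using DirectSum.Decomposition.inductionOn 𝒜 with
  | zero => exact ⟨0, by rw [mul_zero, zero_mul]⟩
  | @homogeneous i m =>
    exact ⟨(-1 : A) ^ ((1 : ZMod 2).val * i.val) * m, by rw [hsc 1 i a m ha m.2, mul_assoc]⟩
  | add m m' hm hm' =>
    obtain ⟨r₁, h₁⟩ := hm
    obtain ⟨r₂, h₂⟩ := hm'
    exact ⟨r₁ + r₂, by rw [mul_add, h₁, h₂, add_mul]⟩

theorem artinianRing_iff_bosonicReduction_artinianRing_general
    (A : Type*) [Ring A] (𝒜 : ZMod 2 → AddSubgroup A) [GradedRing 𝒜]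
    (hsc : ∀ (i j : ZMod 2) (a b : A), a ∈ 𝒜 i → b ∈ 𝒜 j →
      a * b = (-1 : A) ^ (i.val * j.val) * (b * a))
    (J : TwoSidedIdeal A)
    (hfg : ∃ s : Finset A, (s : Set A) ⊆ (𝒜 1 : Set A) ∧
      TwoSidedIdeal.span (s : Set A) = J)
    (hnil : ∃ n : ℕ, ∀ l : List A, l.length = n → (∀ a ∈ l, a ∈ J) → l.prod = 0) :
    IsArtinianRing A ↔ IsArtinianRing J.ringCon.Quotient := by
  refine ⟨fun _ ↦ J.ringCon.mk'_surjective.isArtinianRing, fun _ ↦ ?_⟩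
  obtain ⟨s, hs_odd, rfl⟩ := hfg
  obtain ⟨n, hn⟩ := hnil
  have hJ : (TwoSidedIdeal.span (s : Set A)).asIdeal = Ideal.span s :=
    TwoSidedIdeal.asIdeal_span_of_forall_exists_mul_eq_mul fun a ha ↦
      exists_mul_eq_mul_of_mem_odd 𝒜 hsc (hs_odd ha)
  have := (TwoSidedIdeal.span (s : Set A)).isArtinianRing_quotient_asIdeal
  refine isArtinian_of_pow_le_annihilator _ ⟨s, hJ.symm⟩ n ?_
  rw [TwoSidedIdeal.asIdeal_pow_eq_bot_of_forall_list_prod_eq_zero _ hn]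
  exact bot_le

/-- A supercommutative `ℤ/2`-graded ring whose odd ideal is finitely generated and nilpotent
is left Artinian iff its bosonic reduction is Artinian. -/
theorem artinianRing_iff_bosonicReduction_artinianRing
    (A : Type*) [Ring A] (𝒜 : ZMod 2 → AddSubgroup A) [GradedRing 𝒜]
    (hsc : ∀ (i j : ZMod 2) (a b : A), a ∈ 𝒜 i → b ∈ 𝒜 j →
      a * b = (-1 : A) ^ (i.val * j.val) * (b * a))
    (J : TwoSidedIdeal A) (hJ : J = TwoSidedIdeal.span (𝒜 1 : Set A))
    (hfg : ∃ s : Finset A, (s : Set A) ⊆ (𝒜 1 : Set A) ∧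
      TwoSidedIdeal.span (s : Set A) = J)
    (hnil : ∃ n : ℕ, ∀ l : List A, l.length = n → (∀ a ∈ l, a ∈ J) → l.prod = 0) :
    IsArtinianRing A ↔ IsArtinianRing J.ringCon.Quotient :=
  artinianRing_iff_bosonicReduction_artinianRing_general A 𝒜 hsc J hfg hnil
end

section
/- Let A be a supercommutative ℤ/2-graded ring with no additive 2-torsion (for all a ∈ A, 2a = 0 implies a = 0). If the two-sided ideal J generated by the odd component 𝒜 1 is generated as a two-sided ideal by n odd elements θ₁, …, θₙ ∈ 𝒜 1, then every product of n+1 elements of J is zero (i.e. J^(n+1) = 0). -/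
/-!
Without 2-torsion an odd element `u` squares to zero, and supercommutativity then gives
`u * a * u = ±u * u * a = 0` for every homogeneous `a`; so a product of odd elements with a
repeated factor vanishes. Passing an element past an odd `u` only flips the sign of its odd
component, whence `A * θ j = θ j * A`, and every element of `J` is a sum of elements `θ j * b`.
Pushing the `b`'s to the right, a product of `n + 1` such elements becomes
`θ j₀ * ⋯ * θ jₙ * b`, and by pigeonhole some index repeats.
-/

open Pointwise Set

section

variable {A : Type*} [Ring A]

def IsSupercommutative (𝒜 : ZMod 2 → AddSubgroup A) : Prop :=
  ∀ (i j : ZMod 2) (a b : A), a ∈ 𝒜 i → b ∈ 𝒜 j →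
    a * b = (-1 : A) ^ (i.val * j.val) * (b * a)

namespace IsSupercommutative

variable {𝒜 : ZMod 2 → AddSubgroup A} (hsc : IsSupercommutative 𝒜)
include hsc

theorem mul_odd_eq_odd_mul {i : ZMod 2} {a u : A} (ha : a ∈ 𝒜 i) (hu : u ∈ 𝒜 1) :
    a * u = u * ((-1) ^ i.val * a) := by
  rw [hsc i 1 a u ha hu, ZMod.val_one, mul_one, ← mul_assoc, ← mul_assoc,
    ((Commute.neg_one_left u).pow_left _).eq]

theorem mul_self_eq_zero_of_odd (htf : ∀ a : A, 2 * a = 0 → a = 0) {u : A} (hu : u ∈ 𝒜 1) :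
    u * u = 0 := by
  have h := hsc.mul_odd_eq_odd_mul hu hu
  rw [ZMod.val_one, pow_one, neg_one_mul, mul_neg] at h
  exact htf _ (by rw [two_mul]; exact eq_neg_iff_add_eq_zero.mp h)

theorem odd_mul_mul_odd_eq_zero (htf : ∀ a : A, 2 * a = 0 → a = 0) {i : ZMod 2} {a u : A}
    (ha : a ∈ 𝒜 i) (hu : u ∈ 𝒜 1) : u * a * u = 0 := by
  rw [mul_assoc, hsc.mul_odd_eq_odd_mul ha hu, ← mul_assoc, hsc.mul_self_eq_zero_of_odd htf hu,
    zero_mul]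

theorem list_prod_eq_zero_of_not_nodup [GradedRing 𝒜] (htf : ∀ a : A, 2 * a = 0 → a = 0)
    {l : List A} (hl : ∀ u ∈ l, u ∈ 𝒜 1) (h : ¬ l.Nodup) : l.prod = 0 := by
  obtain ⟨u, hdup⟩ := List.exists_duplicate_iff_not_nodup.mpr h
  clear h
  induction hdup with
  | cons_mem hmem =>
    rename_i l'
    obtain ⟨l₁, l₂, rfl⟩ := List.append_of_mem hmem
    have hl₁ : l₁.prod ∈ 𝒜 (l₁.map fun _ => 1).sum := by
      simpa using SetLike.list_prod_map_mem_graded l₁ (fun _ => (1 : ZMod 2)) id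
        fun v hv => hl v (by simp [hv])
    rw [List.prod_cons, List.prod_append, List.prod_cons, ← mul_assoc, ← mul_assoc,
      hsc.odd_mul_mul_odd_eq_zero htf hl₁ (hl u List.mem_cons_self), zero_mul]
  | cons_duplicate _ ih =>
    rw [List.prod_cons, ih fun v hv => hl v (List.mem_cons_of_mem _ hv), mul_zero]

theorem exists_mul_odd_eq_odd_mul [GradedRing 𝒜] {u : A} (hu : u ∈ 𝒜 1) (c : A) :
    ∃ c', c * u = u * c' := by
  induction c using DirectSum.Decomposition.inductionOn 𝒜 with
  | zero => exact ⟨0, by simp⟩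
  | homogeneous a => exact ⟨_, hsc.mul_odd_eq_odd_mul a.2 hu⟩
  | add a b ha hb =>
    obtain ⟨a', ha'⟩ := ha
    obtain ⟨b', hb'⟩ := hb
    exact ⟨a' + b', by rw [add_mul, mul_add, ha', hb']⟩

section OddGenerators

variable [GradedRing 𝒜] {ι : Type*} {θ : ι → A} (hθ : ∀ i, θ i ∈ 𝒜 1)
include hθ

theorem mem_closure_range_mul_univ_of_mem_span {x : A}
    (hx : x ∈ TwoSidedIdeal.span (range θ)) : x ∈ AddSubgroup.closure (range θ * univ) := by
  have h_left : ∀ c y, y ∈ range θ * univ → c * y ∈ range θ * univ := by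
    rintro c _ ⟨_, ⟨j, rfl⟩, b, -, rfl⟩
    obtain ⟨c', hc'⟩ := hsc.exists_mul_odd_eq_odd_mul (hθ j) c
    rw [← mul_assoc, hc', mul_assoc]
    exact mul_mem_mul (mem_range_self j) (mem_univ _)
  have h_right : ∀ y c, y ∈ range θ * univ → y * c ∈ range θ * univ := by
    rintro _ c ⟨_, ⟨j, rfl⟩, b, -, rfl⟩
    rw [mul_assoc]
    exact mul_mem_mul (mem_range_self j) (mem_univ _)
  rw [← TwoSidedIdeal.mem_span_iff_mem_addSubgroup_closure_absorbing h_left h_right]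
  refine TwoSidedIdeal.span_mono ?_ hx
  rintro _ ⟨j, rfl⟩
  simpa using mul_mem_mul (mem_range_self j) (mem_univ (1 : A))

theorem list_prod_map_mul_mul_list_prod_eq_zero [Fintype ι] (htf : ∀ a : A, 2 * a = 0 → a = 0)
    (l : List A) (hl : ∀ x ∈ l, x ∈ AddSubgroup.closure (range θ * univ))
    (s : List ι) (b : A) (hs : Fintype.card ι < s.length + l.length) :
    (s.map θ).prod * b * l.prod = 0 := by
  induction l generalizing s b with
  | nil =>
    have hdup : ¬ (s.map θ).Nodup := fun h => by
      have := h.of_map.length_le_card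
      simp only [List.length_nil] at hs
      omega
    rw [hsc.list_prod_eq_zero_of_not_nodup htf (by simp [hθ]) hdup, zero_mul, zero_mul]
  | cons x l ih =>
    suffices AddSubgroup.closure (range θ * univ) ≤
        ((AddMonoidHom.mulLeft ((s.map θ).prod * b)).comp (AddMonoidHom.mulRight l.prod)).ker by
      simpa [mul_assoc] using this (hl x List.mem_cons_self)
    rw [AddSubgroup.closure_le]
    rintro _ ⟨_, ⟨j, rfl⟩, c, -, rfl⟩
    obtain ⟨b', hb'⟩ := hsc.exists_mul_odd_eq_odd_mul (hθ j) b
    show (s.map θ).prod * b * (θ j * c * l.prod) = 0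
    calc (s.map θ).prod * b * (θ j * c * l.prod)
        = ((s ++ [j]).map θ).prod * (b' * c) * l.prod := by
          simp only [List.map_append, List.prod_append, List.map_cons, List.map_nil,
            List.prod_cons, List.prod_nil, mul_one, mul_assoc, ← mul_assoc b, hb']
      _ = 0 := ih (fun y hy => hl y (List.mem_cons_of_mem _ hy)) (s ++ [j]) (b' * c)
          (by simp only [List.length_append, List.length_cons] at hs ⊢; omega)

end OddGenerators

end IsSupercommutative

end

theorem prod_eq_zero_of_mem_oddIdeal_general
    (A : Type*) [Ring A] (𝒜 : ZMod 2 → AddSubgroup A) [GradedRing 𝒜]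
    (hsc : ∀ (i j : ZMod 2) (a b : A), a ∈ 𝒜 i → b ∈ 𝒜 j →
      a * b = (-1 : A) ^ (i.val * j.val) * (b * a))
    (htf : ∀ a : A, 2 * a = 0 → a = 0)
    (J : TwoSidedIdeal A)
    (n : ℕ) (θ : Fin n → A) (hθ : ∀ i, θ i ∈ 𝒜 1)
    (hgen : TwoSidedIdeal.span (Set.range θ) = J) :
    ∀ l : List A, l.length = n + 1 → (∀ a ∈ l, a ∈ J) → l.prod = 0 := by
  intro l hlen hl
  have hl' : ∀ x ∈ l, x ∈ AddSubgroup.closure (Set.range θ * Set.univ) := fun x hx =>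
    IsSupercommutative.mem_closure_range_mul_univ_of_mem_span hsc hθ (hgen ▸ hl x hx)
  simpa using IsSupercommutative.list_prod_map_mul_mul_list_prod_eq_zero hsc hθ htf l hl' [] 1
    (by simp [hlen])

/-- In a supercommutative `ℤ/2`-graded ring without additive 2-torsion, if the ideal generated
by the odd part is generated (as a two-sided ideal) by `n` odd elements, then any product of
`n + 1` elements of that ideal vanishes. -/
theorem prod_eq_zero_of_mem_oddIdeal
    (A : Type*) [Ring A] (𝒜 : ZMod 2 → AddSubgroup A) [GradedRing 𝒜]
    (hsc : ∀ (i j : ZMod 2) (a b : A), a ∈ 𝒜 i → b ∈ 𝒜 j →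
      a * b = (-1 : A) ^ (i.val * j.val) * (b * a))
    (htf : ∀ a : A, 2 * a = 0 → a = 0)
    (J : TwoSidedIdeal A) (hJ : J = TwoSidedIdeal.span (𝒜 1 : Set A))
    (n : ℕ) (θ : Fin n → A) (hθ : ∀ i, θ i ∈ 𝒜 1)
    (hgen : TwoSidedIdeal.span (Set.range θ) = J) :
    ∀ l : List A, l.length = n + 1 → (∀ a ∈ l, a ∈ J) → l.prod = 0 :=
  prod_eq_zero_of_mem_oddIdeal_general A 𝒜 hsc htf J n θ hθ hgen
end

section
/- Let f : A → B be a local homomorphism of commutative local rings (i.e. f maps the maximal ideal m_A of A into the maximal ideal of B) such that B is flat as an A-module. Then for every A-module M one has length_B(B ⊗_A M) = length_B(B / m_A·B) * length_A(M) as elements of ℕ∞. In particular, if B/m_A·B has finite length as a B-module, then M has finite length over A if and only if B ⊗_A M has finite length over B. -/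
/-- The length of a module: the supremum of the lengths of strictly increasing chains of
submodules, valued in `ℕ∞`. -/
noncomputable def Module.length' (R M : Type*) [Ring R] [AddCommGroup M] [Module R M] : ℕ∞ :=
  ⨆ p : LTSeries (Submodule R M), (p.length : ℕ∞)

/-! `Module.length'` agrees with Mathlib's `Module.length`, so the theorem is
`IsLocalRing.length_baseChange`; the finiteness statement follows because `B ⧸ m_A B` is
nontrivial, so its length is nonzero. -/

theorem Module.length'_eq_length (R M : Type*) [Ring R] [AddCommGroup M] [Module R M] :
    Module.length' R M = Module.length R M := by
  rw [Module.length_eq_height]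
  refine le_antisymm (iSup_le fun p => Order.length_le_height le_top) ?_
  rw [Order.height_eq_iSup_last_eq]
  exact iSup₂_le fun p _ => le_iSup (fun p : LTSeries _ => (p.length : ℕ∞)) p

theorem ENat.mul_lt_top_iff_right {a b : ℕ∞} (ha₀ : a ≠ 0) (ha : a < ⊤) :
    a * b < ⊤ ↔ b < ⊤ := by
  refine ⟨fun h => ?_, WithTop.mul_lt_top ha⟩
  contrapose! h
  rw [top_le_iff.1 h, ENat.mul_top ha₀]

open TensorProduct IsLocalRing in
/-- For a flat local homomorphism `A → B` of local rings, the `B`-length of `B ⊗[A] M` is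
`length_B (B / m_A B) * length_A M`; in particular, if `B / m_A B` has finite length, then
`M` has finite length over `A` iff `B ⊗[A] M` has finite length over `B`. -/
theorem Module.length_baseChange_of_flat_localHom
    (A B : Type*) [CommRing A] [CommRing B] [IsLocalRing A] [IsLocalRing B]
    [Algebra A B]
    (hloc : ∀ a ∈ maximalIdeal A, algebraMap A B a ∈ maximalIdeal B)
    [Module.Flat A B]
    (M : Type*) [AddCommGroup M] [Module A M] :
    Module.length' B (B ⊗[A] M) =
      Module.length' B (B ⧸ (maximalIdeal A).map (algebraMap A B)) * Module.length' A M ∧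
    (Module.length' B (B ⧸ (maximalIdeal A).map (algebraMap A B)) < ⊤ →
      (Module.length' A M < ⊤ ↔ Module.length' B (B ⊗[A] M) < ⊤)) := by
  have : IsLocalHom (algebraMap A B) := ((local_hom_TFAE _).out 3 0).mp hloc
  simp only [Module.length'_eq_length]
  have hmul := IsLocalRing.length_baseChange A B M
  rw [mul_comm] at hmul
  have hfiber_ne_zero : Module.length B (B ⧸ (maximalIdeal A).map (algebraMap A B)) ≠ 0 := by
    rw [Ne, Module.length_eq_zero_iff, Submodule.Quotient.subsingleton_iff]
    exact (map_maximalIdeal_lt_top (algebraMap A B)).ne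
  exact ⟨hmul, fun hfin => by rw [hmul, ENat.mul_lt_top_iff_right hfiber_ne_zero hfin]⟩
end

section
/- Let R be a commutative domain and let a, b ∈ R be nonzero elements. Then length_R(R/(a·b)) = length_R(R/(a)) + length_R(R/(b)) as elements of ℕ∞; in particular, if the quotients R/(a) and R/(b) have finite length as R-modules, then so does R/(a·b). -/
theorem Module.length_quotient_span_mul_general
    (R : Type*) [CommRing R] [IsDomain R] (a b : R) (hb : b ≠ 0) :
    Module.length' R (R ⧸ Ideal.span {a * b}) =
      Module.length' R (R ⧸ Ideal.span {a}) + Module.length' R (R ⧸ Ideal.span {b}) ∧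
    (Module.length' R (R ⧸ Ideal.span {a}) < ⊤ → Module.length' R (R ⧸ Ideal.span {b}) < ⊤ →
      Module.length' R (R ⧸ Ideal.span {a * b}) < ⊤) := by
  have hmul := Ring.ord_mul R (a := a) (mem_nonZeroDivisors_of_ne_zero hb)
  simp only [Ring.ord, ← Module.length'_eq_length] at hmul
  rw [hmul]
  exact ⟨rfl, fun hfin_a hfin_b => WithTop.add_lt_top.mpr ⟨hfin_a, hfin_b⟩⟩

/-- In a commutative domain `R`, for nonzero `a b : R` one has
`length (R/(a·b)) = length (R/(a)) + length (R/(b))`; in particular, if `R/(a)` and `R/(b)`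
have finite length, so does `R/(a·b)`. -/
theorem Module.length_quotient_span_mul
    (R : Type*) [CommRing R] [IsDomain R] (a b : R) (ha : a ≠ 0) (hb : b ≠ 0) :
    Module.length' R (R ⧸ Ideal.span {a * b}) =
      Module.length' R (R ⧸ Ideal.span {a}) + Module.length' R (R ⧸ Ideal.span {b}) ∧
    (Module.length' R (R ⧸ Ideal.span {a}) < ⊤ → Module.length' R (R ⧸ Ideal.span {b}) < ⊤ →
      Module.length' R (R ⧸ Ideal.span {a * b}) < ⊤) :=
  Module.length_quotient_span_mul_general R a b hb
end

section
/- Let κ be a field and let C be a commutative κ-algebra which is finite-dimensional as a κ-vector space. Then C has only finitely many maximal ideals; for each maximal ideal 𝔪 of C the localization C_𝔪 has finite length as a module over itself and the residue field C/𝔪 is a finite-dimensional κ-vector space; and finrank_κ(C) = Σ_𝔪 length_{C_𝔪}(C_𝔪) · finrank_κ(C/𝔪), the sum running over all maximal ideals 𝔪 of C. -/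
/-- The length of a module: the supremum of the lengths of strictly increasing chains of
submodules, valued in `ℕ∞`. -/
noncomputable def Module.chainLength (R M : Type*) [Ring R] [AddCommGroup M] [Module R M] : ℕ∞ :=
  ⨆ p : LTSeries (Submodule R M), (p.length : ℕ∞)

/-! An Artinian ring is the product of its localizations at its finitely many maximal ideals,
so `finrank_κ C` is the sum of the `κ`-lengths of the `C_𝔪`. Every composition factor of the
local ring `C_𝔪` is its residue field `C/𝔪`, hence `length_κ C_𝔪 = length_{C_𝔪} C_𝔪 · [C/𝔪 : κ]`. -/

open Module IsLocalRing

theorem Module.chainLength_eq_length (R M : Type*) [Ring R] [AddCommGroup M] [Module R M] :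
    chainLength R M = length R M := by
  apply WithBot.coe_injective
  rw [coe_length, Order.krullDim_eq_iSup_length, chainLength]

theorem Module.length_eq_sum_length_localizationAtPrime (κ C : Type*) [CommRing κ] [CommRing C]
    [Algebra κ C] [DiscreteTopology (PrimeSpectrum C)] [Fintype (MaximalSpectrum C)] :
    length κ C = ∑ 𝔪 : MaximalSpectrum C, length κ (Localization.AtPrime 𝔪.asIdeal) := by
  rw [← length_pi_of_fintype]
  exact (((MaximalSpectrum.toPiLocalizationEquiv C).restrictScalars κ).toLinearEquiv).length_eq

theorem Ideal.length_residueField_eq_length_quotient (κ : Type*) {C : Type*} [CommRing κ]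
    [CommRing C] [Algebra κ C] (𝔪 : Ideal C) [𝔪.IsMaximal] :
    length κ 𝔪.ResidueField = length κ (C ⧸ 𝔪) :=
  (AlgEquiv.ofBijective (IsScalarTower.toAlgHom κ (C ⧸ 𝔪) 𝔪.ResidueField)
    𝔪.bijective_algebraMap_quotient_residueField).toLinearEquiv.length_eq.symm

theorem Ideal.length_localizationAtPrime_eq_length_mul_length_quotient (κ : Type*) {C : Type*}
    [Field κ] [CommRing C] [Algebra κ C] (𝔪 : Ideal C) [𝔪.IsMaximal] :
    length κ (Localization.AtPrime 𝔪) =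
      length (Localization.AtPrime 𝔪) (Localization.AtPrime 𝔪) * length κ (C ⧸ 𝔪) := by
  rw [length_restrictScalars κ (Localization.AtPrime 𝔪) (Localization.AtPrime 𝔪),
    ← 𝔪.length_residueField_eq_length_quotient κ,
    length_eq_of_surjective (residue_surjective (R := κ))]

/-- For a finite-dimensional commutative algebra `C` over a field `κ`: `C` has finitely many
maximal ideals, each localization `C_𝔪` has finite length over itself, each residue field
`C/𝔪` is finite-dimensional over `κ`, and
`finrank_κ C = Σ_𝔪 length_{C_𝔪} (C_𝔪) * finrank_κ (C/𝔪)`. -/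
theorem finrank_eq_sum_length_mul_finrank_residue
    (κ : Type*) [Field κ] (C : Type*) [CommRing C] [Algebra κ C] [FiniteDimensional κ C] :
    Finite (MaximalSpectrum C) ∧
    (∀ 𝔪 : MaximalSpectrum C,
      Module.chainLength (Localization.AtPrime 𝔪.asIdeal) (Localization.AtPrime 𝔪.asIdeal) < ⊤ ∧
      FiniteDimensional κ (C ⧸ 𝔪.asIdeal)) ∧
    Module.finrank κ C =
      ∑ᶠ 𝔪 : MaximalSpectrum C,
        (Module.chainLength (Localization.AtPrime 𝔪.asIdeal)
            (Localization.AtPrime 𝔪.asIdeal)).toNat *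
          Module.finrank κ (C ⧸ 𝔪.asIdeal) := by
  have : IsArtinianRing C := .of_finite κ C
  have : Fintype (MaximalSpectrum C) := .ofFinite _
  have hfin (𝔪 : MaximalSpectrum C) :
      length (Localization.AtPrime 𝔪.asIdeal) (Localization.AtPrime 𝔪.asIdeal) ≠ ⊤ :=
    length_ne_top
  refine ⟨inferInstance, fun 𝔪 => ⟨?_, inferInstance⟩, ?_⟩
  · rw [chainLength_eq_length]
    exact lt_top_iff_ne_top.mpr (hfin 𝔪)
  rw [finsum_eq_sum_of_fintype]
  apply Nat.cast_injective (R := ℕ∞)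
  calc (finrank κ C : ℕ∞) = length κ C := (length_eq_finrank κ C).symm
    _ = ∑ 𝔪 : MaximalSpectrum C, length κ (Localization.AtPrime 𝔪.asIdeal) :=
      length_eq_sum_length_localizationAtPrime κ C
    _ = _ := by
      push_cast
      simp only [Ideal.length_localizationAtPrime_eq_length_mul_length_quotient, length_eq_finrank,
        chainLength_eq_length, ENat.natCast_toNat (hfin _)]
end
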